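/- arXiv:1709.08192 — 6 statements merged into one kernel-verified Lean document; each statement's English description precedes it below -/
import Mathlib

section
/- Let R be a discrete valuation ring with maximal ideal m, residue field k, and fraction field M. Let F : R² → R² be an R-linear endomorphism such that the subring R[F] of End_R(R²) generated by R and F is a free R-module of rank two. Let S = End_{R[F]}(R²) be the ring of R-linear endomorphisms of R² commuting with F. Then R² is a free S-module of rank one. -/
/-!
`R[F]` has rank two, so `F` is not a scalar. In a valuation ring the entries of `F - c` (with
`c` the corner entry) have a common divisor `d` generating the ideal they span, so
`F = c + d • G` where `G` is not a scalar modulo the maximal ideal. Such a `G` has a cyclic vector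
`r`, i.e. `R² = R[G] r`, and since `d ≠ 0` the commutants of `F` and `G` agree. Evaluation at a
cyclic vector identifies the commutant of `G` with `R²`.
-/

open Submodule Matrix

theorem ValuationRing.exists_dvd_forall {R ι : Type*} [CommRing R] [IsDomain R] [ValuationRing R]
    [Finite ι] [Nonempty ι] (v : ι → R) : ∃ i, ∀ j, v i ∣ v j := by
  classical
  have := Fintype.ofFinite ι
  obtain ⟨i, -, hi⟩ :=
    Finset.exists_mem_eq_sup Finset.univ Finset.univ_nonempty fun j => Ideal.span {v j}
  refine ⟨i, fun j => Ideal.span_singleton_le_span_singleton.1 ?_⟩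
  exact hi ▸ Finset.le_sup (f := fun j => Ideal.span {v j}) (Finset.mem_univ j)

theorem ValuationRing.exists_eq_smul_of_ne_zero {R ι : Type*} [CommRing R] [IsDomain R]
    [ValuationRing R] [Finite ι] (v : ι → R) (hv : v ≠ 0) :
    ∃ d : R, d ≠ 0 ∧ ∃ w : ι → R, v = d • w ∧ ∃ i, w i = 1 := by
  obtain ⟨j, hj⟩ := Function.ne_iff.1 hv
  have : Nonempty ι := ⟨j⟩
  obtain ⟨i, hi⟩ := exists_dvd_forall v
  choose w hw using hi
  have hvi : v i ≠ 0 := fun h => hj (zero_dvd_iff.1 (h ▸ ⟨w j, hw j⟩))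
  refine ⟨v i, hvi, w, funext hw, i, ?_⟩
  exact mul_left_cancel₀ hvi (by rw [mul_one, ← hw i])

theorem Matrix.span_range_eq_top_of_isUnit_det {R n : Type*} [CommRing R] [Fintype n]
    [DecidableEq n] (A : Matrix n n R) (hA : IsUnit A.det) : span R (Set.range A.row) = ⊤ := by
  rw [← range_vecMulLinear, LinearMap.range_eq_top]
  exact vecMul_surjective_iff_isUnit.2 ((isUnit_iff_isUnit_det A).2 hA)

theorem Matrix.exists_span_pair_mulVec_eq_top {R : Type*} [CommRing R] [IsLocalRing R]
    (B : Matrix (Fin 2) (Fin 2) R)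
    (hB : IsUnit (B 0 1) ∨ IsUnit (B 1 0) ∨ IsUnit (B 1 1 - B 0 0)) :
    ∃ r, span R {r, B *ᵥ r} = ⊤ := by
  -- `det (r, B r)` is the quadratic form `B₁₀ x² + (B₁₁ - B₀₀) x y - B₀₁ y²` in `r = (x, y)`.
  suffices ∃ r : Fin 2 → R, IsUnit (of ![r, B *ᵥ r]).det by
    obtain ⟨r, hr⟩ := this
    have := span_range_eq_top_of_isUnit_det _ hr
    rw [show (of ![r, B *ᵥ r]).row = ![r, B *ᵥ r] from rfl, range_cons_cons_empty] at this
    exact ⟨r, this⟩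
  by_cases h10 : IsUnit (B 1 0)
  · exact ⟨![1, 0], by simpa [det_fin_two, mulVec, dotProduct] using h10⟩
  by_cases h01 : IsUnit (B 0 1)
  · exact ⟨![0, 1], by simpa [det_fin_two, mulVec, dotProduct] using h01.neg⟩
  have h11 : IsUnit (B 1 1 - B 0 0) := by tauto
  refine ⟨![1, 1], ?_⟩
  have hdet : (of ![![1, 1], B *ᵥ ![1, 1]]).det + (B 0 1 - B 1 0) = B 1 1 - B 0 0 := by
    simp [det_fin_two]
    ring
  rw [← hdet] at h11
  refine (IsLocalRing.isUnit_or_isUnit_of_isUnit_add h11).resolve_right fun h => ?_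
  exact (IsLocalRing.mem_maximalIdeal _).1 ((IsLocalRing.maximalIdeal R).sub_mem h01 h10) h

theorem Matrix.exists_eq_algebraMap_add_smul {R : Type*} [CommRing R] [IsDomain R]
    [ValuationRing R] (A : Matrix (Fin 2) (Fin 2) R) (hA : A ∉ Set.range (algebraMap R _)) :
    ∃ c d : R, d ≠ 0 ∧ ∃ B : Matrix (Fin 2) (Fin 2) R, A = algebraMap R _ c + d • B ∧
      (IsUnit (B 0 1) ∨ IsUnit (B 1 0) ∨ IsUnit (B 1 1 - B 0 0)) := by
  set N := A - algebraMap R _ (A 0 0) with hN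
  have hN0 : (fun p : Fin 2 × Fin 2 => N p.1 p.2) ≠ 0 := fun h =>
    hA ⟨A 0 0, (sub_eq_zero.1 (funext₂ fun i j => congrFun h (i, j))).symm⟩
  obtain ⟨d, hd, w, hw, ij, hij⟩ := ValuationRing.exists_eq_smul_of_ne_zero _ hN0
  set B : Matrix (Fin 2) (Fin 2) R := of fun i j => w (i, j)
  have hNB : N = d • B := funext₂ fun i j => congrFun hw (i, j)
  refine ⟨A 0 0, d, hd, B, eq_add_of_sub_eq' hNB, ?_⟩
  have hB00 : B 0 0 = 0 := by
    have : d = 0 ∨ B 0 0 = 0 := by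
      simpa [hN, algebraMap_matrix_apply] using (congrFun₂ hNB 0 0).symm
    exact this.resolve_left hd
  obtain ⟨i, j⟩ := ij
  fin_cases i <;> fin_cases j <;> simp_all [B]

theorem Algebra.notMem_range_algebraMap_of_finrank_adjoin_ne_one {R A : Type*} [CommRing R]
    [IsDomain R] [Ring A] [Algebra R A] [Module.IsTorsionFree R A] [Nontrivial A] {F : A}
    (hF : Module.finrank R (adjoin R {F}) ≠ 1) : F ∉ Set.range (algebraMap R A) := by
  rintro ⟨c, rfl⟩
  exact hF (by rw [adjoin_singleton_algebraMap, Subalgebra.finrank_bot])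

theorem Subalgebra.centralizer_singleton_algebraMap_add_smul {R A : Type*} [CommRing R] [Ring A]
    [Algebra R A] (c : R) {d : R} (hd : IsSMulRegular A d) (G : A) :
    centralizer R {algebraMap R A c + d • G} = centralizer R {G} := by
  ext s
  simp only [mem_centralizer_iff, Set.mem_singleton_iff, forall_eq, add_mul, mul_add,
    Algebra.commutes, smul_mul_assoc, mul_smul_comm, add_right_inj]
  exact hd.eq_iff

namespace Module.End

variable {R M : Type*} [CommSemiring R] [AddCommMonoid M] [Module R M]

theorem exists_mem_adjoin_apply_eq_of_span_pair_eq_top {G : End R M} {r : M}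
    (h : span R {r, G r} = ⊤) (x : M) : ∃ p ∈ Algebra.adjoin R {G}, p r = x := by
  obtain ⟨a, b, rfl⟩ := mem_span_pair.1 (h ▸ mem_top : x ∈ span R {r, G r})
  refine ⟨a • 1 + b • G, add_mem (Subalgebra.smul_mem _ (one_mem _) a)
    (Subalgebra.smul_mem _ (Algebra.self_mem_adjoin_singleton R G) b), by simp⟩

theorem bijective_centralizer_apply_of_cyclic {G : End R M} {r : M}
    (hr : ∀ x, ∃ p ∈ Algebra.adjoin R {G}, p r = x) :
    Function.Bijective fun s : Subalgebra.centralizer R {G} => (s : End R M) r := by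
  have hcomm : ∀ s ∈ Subalgebra.centralizer R {G}, ∀ p ∈ Algebra.adjoin R {G}, ∀ x,
      s (p x) = p (s x) := fun s hs p hp x =>
    LinearMap.congr_fun (Algebra.commute_of_mem_adjoin_singleton_of_commute hp
      ((Subalgebra.mem_centralizer_iff R).1 hs G rfl).symm) x
  refine ⟨fun s t hst => Subtype.ext (LinearMap.ext fun x => ?_), fun x => ?_⟩
  · obtain ⟨p, hp, rfl⟩ := hr x
    rw [hcomm s s.2 p hp, hcomm t t.2 p hp]
    exact congrArg p hst
  · obtain ⟨p, hp, rfl⟩ := hr x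
    refine ⟨⟨p, (Subalgebra.mem_centralizer_iff R).2 fun g hg => ?_⟩, rfl⟩
    exact hg ▸ (Algebra.commute_of_mem_adjoin_singleton_of_commute hp (Commute.refl G)).eq

end Module.End

/-- Let `R` be a DVR and `F` an `R`-linear endomorphism of `R²` such that the subalgebra
`R[F]` of `End_R(R²)` generated by `F` is free of rank two over `R`.  Then `R²` is free of
rank one over the commutant `S = End_{R[F]}(R²)` of `F`:  there is an element `r ∈ R²` such
that `s ↦ s(r)` is a bijection from `S` onto `R²`. -/
theorem integral_frobenius_key_lemma_dvr
    (R : Type*) [CommRing R] [IsDomain R] [IsDiscreteValuationRing R]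
    (F : Module.End R (Fin 2 → R))
    (hfree : Nonempty (Module.Basis (Fin 2) R (Algebra.adjoin R ({F} : Set (Module.End R (Fin 2 → R)))))) :
    ∃ r : Fin 2 → R,
      Function.Bijective
        (fun s : Subalgebra.centralizer R ({F} : Set (Module.End R (Fin 2 → R))) =>
          (s : Module.End R (Fin 2 → R)) r) := by
  obtain ⟨b⟩ := hfree
  have hF : F ∉ Set.range (algebraMap R _) :=
    Algebra.notMem_range_algebraMap_of_finrank_adjoin_ne_one
      (by simp [Module.finrank_eq_card_basis b])
  let e := LinearMap.toMatrixAlgEquiv' (R := R) (n := Fin 2)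
  obtain ⟨c, d, hd, B, hAB, hB⟩ := (e F).exists_eq_algebraMap_add_smul fun ⟨c, hc⟩ =>
    hF ⟨c, e.injective (by rw [AlgEquiv.commutes, hc])⟩
  have hFB : F = algebraMap R _ c + d • Matrix.toLinAlgEquiv' B := by
    simpa [e] using congrArg e.symm hAB
  obtain ⟨r, hr⟩ := B.exists_span_pair_mulVec_eq_top hB
  refine ⟨r, ?_⟩
  rw [hFB, Subalgebra.centralizer_singleton_algebraMap_add_smul c (IsSMulRegular.of_ne_zero hd)]
  exact Module.End.bijective_centralizer_apply_of_cyclic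
    (Module.End.exists_mem_adjoin_apply_eq_of_span_pair_eq_top hr)
end

section
/- Let O be a Dedekind domain with fraction field E, let L be a quadratic étale E-algebra (either a quadratic field extension of E or isomorphic to E × E), and let π ∈ L be integral over O with π ∉ E. For any O-order S ⊆ L containing O[π], letting b_S ⊆ O be the annihilator of the O-module S/O[π], one has O[π] = O + b_S·S. -/
/-!
Since `π ∉ E` and `[L : E] = 2`, `1, π` is an `E`-basis of `L`; let `y : L → E` be the
`π`-coordinate. An element of `L` that is integral over `O` and has `y`-coordinate in `O` lies in
`O[π]`, because its other coordinate is then integral over `O` and lies in `E`, hence in `O`.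
As elements of `S` are integral, the conductor therefore contains every `a ∈ O` with
`a • y(S) ⊆ O`, i.e. it contains `I⁻¹` for the fractional ideal `I = y(S) ∋ 1`. Invertibility of
`I` gives `1 ∈ b_S • I = y(b_S • S)`, so some `w ∈ b_S • S` has `y w = 1`; then `w - π ∈ O`,
so `π ∈ O + b_S • S`. Finally `O + b_S • S` is a subring, since `b_S • S` is an ideal of `S`.
-/

theorem exists_coord_of_finrank_eq_two {E L : Type*} [Field E] [CommRing L] [Algebra E L]
    {π : L} (hπ : π ∉ (algebraMap E L).range) (hdim : Module.finrank E L = 2) :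
    ∃ y : L →ₗ[E] E, y π = 1 ∧ ∀ z, z - y z • π ∈ (algebraMap E L).range := by
  have : Nontrivial L := Module.nontrivial_of_finrank_pos (R := E) (by omega)
  have li : LinearIndependent E ![π, 1] := linearIndependent_fin2.mpr
    ⟨one_ne_zero, fun a h => hπ ⟨a, by simpa [Algebra.algebraMap_eq_smul_one] using h⟩⟩
  let B := basisOfLinearIndependentOfCardEqFinrank li (by simp [hdim])
  have hB : ⇑B = ![π, 1] := coe_basisOfLinearIndependentOfCardEqFinrank li _
  refine ⟨B.coord 0, ?_, fun z => ⟨B.repr z 1, ?_⟩⟩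
  · have hπB : π = B 0 := by simp [hB]
    rw [Module.Basis.coord_apply, hπB, B.repr_self, Finsupp.single_eq_same]
  · have hz := B.sum_repr z
    rw [Fin.sum_univ_two, hB] at hz
    rw [Module.Basis.coord_apply, eq_sub_iff_add_eq, Algebra.algebraMap_eq_smul_one, add_comm]
    simpa using hz

theorem one_mem_colon_one_smul {O E : Type*} [CommRing O] [IsDedekindDomain O] [Field E]
    [Algebra O E] [IsFractionRing O E] {I : Submodule O E} (hI : I.FG) (h1 : (1 : E) ∈ I) :
    (1 : E) ∈ (1 : Submodule O E).colon (I : Set E) • I := by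
  let J : FractionalIdeal (nonZeroDivisors O) E := ⟨I, FractionalIdeal.isFractional_of_fg hI⟩
  have hJ : J ≠ 0 := fun h => one_ne_zero (by
    have : (1 : E) ∈ (J : Submodule O E) := h1
    rwa [h, FractionalIdeal.coe_zero, Submodule.mem_bot] at this)
  have h1JJ : (1 : E) ∈ (J : Submodule O E) * (J⁻¹ : FractionalIdeal (nonZeroDivisors O) E) := by
    rw [← FractionalIdeal.coe_mul, mul_inv_cancel₀ hJ]
    exact FractionalIdeal.one_mem_one _
  refine Submodule.mul_le.mpr (fun m hm n hn => ?_) h1JJ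
  have hn' := (FractionalIdeal.mem_inv_iff hJ).mp hn
  obtain ⟨a, rfl⟩ := (FractionalIdeal.mem_one_iff _).mp (mul_one n ▸ hn' 1 h1)
  rw [mul_comm, ← Algebra.smul_def]
  refine Submodule.smul_mem_smul (Submodule.mem_colon.mpr fun v hv => ?_) hm
  rw [Algebra.smul_def, ← FractionalIdeal.coe_one]
  exact hn' v hv

theorem mul_le_one_sup_smul {R A : Type*} [CommSemiring R] [Semiring A] [Algebra R A]
    (S : Subalgebra R A) (b : Ideal R) :
    (1 ⊔ b • Subalgebra.toSubmodule S) * (1 ⊔ b • Subalgebra.toSubmodule S) ≤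
      1 ⊔ b • Subalgebra.toSubmodule S := by
  set N := b • Subalgebra.toSubmodule S
  have hN : N * N ≤ N := Submodule.mul_le.mpr fun x hx y hy => by
    have hyS : y ∈ S := Submodule.smul_le_right hy
    refine Submodule.smul_induction_on hx (fun a ha s hs => ?_) (fun x x' hx hx' => ?_)
    · rw [smul_mul_assoc]; exact Submodule.smul_mem_smul ha (S.mul_mem hs hyS)
    · rw [add_mul]; exact add_mem hx hx'
  rw [Submodule.sup_mul, Submodule.mul_sup, Submodule.mul_sup, one_mul, mul_one, one_mul]
  exact sup_le le_rfl (sup_le le_sup_right (hN.trans le_sup_right))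

theorem adjoin_toSubmodule_le_one_sup_smul {R A : Type*} [CommSemiring R] [Semiring A]
    [Algebra R A] (S : Subalgebra R A) (b : Ideal R) {s : Set A}
    (hs : s ⊆ (1 ⊔ b • Subalgebra.toSubmodule S : Submodule R A)) :
    Subalgebra.toSubmodule (Algebra.adjoin R s) ≤ 1 ⊔ b • Subalgebra.toSubmodule S :=
  Algebra.adjoin_le (S := Submodule.toSubalgebra _
    (Submodule.mem_sup_left (Submodule.one_le.mp le_rfl))
    fun _ _ hx hy => mul_le_one_sup_smul S b (Submodule.mul_mem_mul hx hy)) hs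

section Conductor

variable {O E L : Type*} [CommRing O] [IsIntegrallyClosed O] [Field E] [Algebra O E]
  [IsFractionRing O E] [CommRing L] [Nontrivial L] [Algebra E L] [Algebra O L]
  [IsScalarTower O E L]

theorem mem_range_algebraMap_of_isIntegral {z : L} (hzE : z ∈ (algebraMap E L).range)
    (hz : IsIntegral O z) : z ∈ (algebraMap O L).range := by
  obtain ⟨e, rfl⟩ := hzE
  obtain ⟨a, rfl⟩ := IsIntegrallyClosed.isIntegral_iff.mp
    ((isIntegral_algHom_iff (IsScalarTower.toAlgHom O E L) (algebraMap E L).injective).mp hz)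
  exact ⟨a, IsScalarTower.algebraMap_apply O E L a⟩

theorem mem_adjoin_of_isIntegral {π : L} (y : L →ₗ[E] E)
    (hy : ∀ z, z - y z • π ∈ (algebraMap E L).range) (hπ : IsIntegral O π) {z : L}
    (hz : IsIntegral O z) (hyz : y z ∈ (1 : Submodule O E)) : z ∈ Algebra.adjoin O {π} := by
  obtain ⟨a, ha⟩ := Submodule.mem_one.mp hyz
  have hz_sub : z - a • π ∈ (algebraMap E L).range := by
    rw [← algebraMap_smul E, ha]
    exact hy z
  obtain ⟨c, hc⟩ := mem_range_algebraMap_of_isIntegral hz_sub (hz.sub (hπ.smul a))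
  rw [← sub_add_cancel z (a • π), ← hc]
  exact add_mem (Subalgebra.algebraMap_mem _ c)
    (Subalgebra.smul_mem _ (Algebra.self_mem_adjoin_singleton O π) a)

theorem colon_one_map_le_colon_adjoin {π : L} (y : L →ₗ[E] E)
    (hy : ∀ z, z - y z • π ∈ (algebraMap E L).range) {S : Subalgebra O L}
    (hfg : (Subalgebra.toSubmodule S).FG) (hπS : π ∈ S) :
    (1 : Submodule O E).colon ((Subalgebra.toSubmodule S).map (y.restrictScalars O) : Set E) ≤
      (Subalgebra.toSubmodule (Algebra.adjoin O {π})).colon (Subalgebra.toSubmodule S : Set L) := by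
  intro a ha
  rw [Submodule.mem_colon] at ha ⊢
  intro s hs
  refine mem_adjoin_of_isIntegral y hy (.of_mem_of_fg S hfg π hπS)
    (.of_mem_of_fg S hfg _ (S.smul_mem hs a)) ?_
  rw [← LinearMap.restrictScalars_apply (R := O), map_smul]
  exact ha _ ⟨s, hs, rfl⟩

end Conductor

theorem order_eq_base_sup_conductor_smul {u : Type} (O E L : Type u)
    [CommRing O] [IsDedekindDomain O]
    [Field E] [Algebra O E] [IsFractionRing O E]
    [CommRing L] [Algebra E L] [Algebra O L] [IsScalarTower O E L]
    (hdim : Module.finrank E L = 2)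
    (π : L) (hπ : π ∉ (algebraMap E L).range)
    (S : Subalgebra O L) (hS : Algebra.adjoin O ({π} : Set L) ≤ S)
    (hfg : (Subalgebra.toSubmodule S).FG) :
    Subalgebra.toSubmodule (Algebra.adjoin O ({π} : Set L)) =
      (1 : Submodule O L) ⊔
        ((Subalgebra.toSubmodule (Algebra.adjoin O ({π} : Set L))).colon
            (Subalgebra.toSubmodule S)) • (Subalgebra.toSubmodule S) := by
  have : Nontrivial L := Module.nontrivial_of_finrank_pos (R := E) (by omega)
  obtain ⟨y, hyπ, hy⟩ := exists_coord_of_finrank_eq_two hπ hdim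
  set b := (Subalgebra.toSubmodule (Algebra.adjoin O ({π} : Set L))).colon
    (Subalgebra.toSubmodule S : Set L)
  have hπS : π ∈ S := hS (Algebra.self_mem_adjoin_singleton O π)
  have hbS : b • Subalgebra.toSubmodule S ≤ Subalgebra.toSubmodule (Algebra.adjoin O {π}) :=
    Submodule.smul_le.mpr fun a ha s hs => Submodule.mem_colon.mp ha s hs
  obtain ⟨w, hw, hyw⟩ : ∃ w ∈ b • Subalgebra.toSubmodule S, y w = 1 := by
    have h := Submodule.smul_mono_left (colon_one_map_le_colon_adjoin y hy hfg hπS)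
      (one_mem_colon_one_smul (hfg.map (y.restrictScalars O)) ⟨π, hπS, hyπ⟩)
    rwa [← Submodule.map_smul''] at h
  have hwπ : w - π ∈ (1 : Submodule O L) := Submodule.mem_one.mpr <|
    mem_range_algebraMap_of_isIntegral (by simpa [hyw] using hy w)
      ((IsIntegral.of_mem_of_fg S hfg w (Submodule.smul_le_right hw)).sub
        (.of_mem_of_fg S hfg π hπS))
  refine le_antisymm (adjoin_toSubmodule_le_one_sup_smul S b ?_)
    (sup_le (Submodule.one_le.mpr (Subalgebra.one_mem _)) hbS)
  simpa using Submodule.sub_mem _ (Submodule.mem_sup_right hw) (Submodule.mem_sup_left hwπ)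
end

section
/- Let O be a principal ideal Dedekind domain with fraction field E, π ∉ E quadratic over E with minimal polynomial h(x) = x² − ax + s ∈ O[x], and b ∈ O nonzero such that there is u ∈ O with 2u − a ∈ (b) and u² − au + s ∈ (b²). Then u is uniquely determined modulo (b): if u' is another element of O satisfying both conditions, then u ≡ u' mod (b). -/
open Polynomial

/-- `d / b` is a root of the monic polynomial `X² + c X - e`, where `t - d = b c` and
`d t = b² e`; integral closedness then puts it in `R`. -/
theorem dvd_of_sq_dvd_mul_of_dvd_sub {R : Type*} [CommRing R] [IsDomain R] [IsIntegrallyClosed R]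
    {b d t : R} (hb : b ≠ 0) (hdt : b ^ 2 ∣ d * t) (hsub : b ∣ t - d) : b ∣ d := by
  obtain ⟨e, he⟩ := hdt
  obtain ⟨c, hc⟩ := hsub
  set K := FractionRing R
  have hbK : algebraMap R K b ≠ 0 := IsFractionRing.to_map_ne_zero_of_mem_nonZeroDivisors
    (mem_nonZeroDivisors_of_ne_zero hb)
  set x : K := algebraMap R K d / algebraMap R K b
  have hd : algebraMap R K d = x * algebraMap R K b := (div_mul_cancel₀ _ hbK).symm
  have hroot : x ^ 2 + algebraMap R K c * x - algebraMap R K e = 0 := by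
    have := congrArg (algebraMap R K)
      (show b ^ 2 * e = d * (d + b * c) by linear_combination -he + d * hc)
    simp only [map_mul, map_pow, map_add, hd] at this
    apply mul_left_cancel₀ (pow_ne_zero 2 hbK)
    linear_combination -this
  have hint : IsIntegral R x := by
    refine ⟨X ^ 2 + C c * X - C e, ?_, ?_⟩
    · monicity!
    · simpa [eval₂_sub, eval₂_add, eval₂_mul] using hroot
  obtain ⟨y, hy⟩ := IsIntegrallyClosed.algebraMap_eq_of_integral hint
  refine ⟨y, IsFractionRing.injective R K ?_⟩
  rw [map_mul, hy, hd, mul_comm]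

theorem congruence_solution_unique_mod_b {v : Type} (O : Type v)
    [CommRing O] [IsDomain O] [IsPrincipalIdealRing O]
    (a s : O)
    (b : O) (hb : b ≠ 0) (u u' : O)
    (hu2 : u ^ 2 - a * u + s ∈ Ideal.span {b ^ 2})
    (hu'1 : 2 * u' - a ∈ Ideal.span {b}) (hu'2 : u' ^ 2 - a * u' + s ∈ Ideal.span {b ^ 2}) :
    u - u' ∈ Ideal.span {b} := by
  rw [Ideal.mem_span_singleton] at *
  -- `h(u) - h(u') = (u - u') (u + u' - a)` and `(u + u' - a) - (u - u') = h'(u')`.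
  refine dvd_of_sq_dvd_mul_of_dvd_sub (t := u + u' - a) hb ?_ ?_
  · exact (dvd_sub hu2 hu'2).trans (dvd_of_eq (by ring))
  · exact hu'1.trans (dvd_of_eq (by ring))
end

section
/- Let O be a Dedekind domain with fraction field E of characteristic 0, L a quadratic étale E-algebra, π ∈ L integral over O with π ∉ E, and O_L the integral closure of O in L. Let b ⊆ O be an ideal coprime to the ideal (2). Then b divides the conductor b_{O_L} = Ann_O(O_L/O[π]) if and only if b² divides the principal ideal (a² − 4s), where x² − ax + s is the minimal polynomial of π over E. -/
/-!
Write elements of `L` as `x + y π` with `x y : E`, and let `Y ⊆ E` be the set of coefficients `y`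
of the elements of `O_L`. An element `c ∈ O` lies in the conductor iff `c Y ⊆ O`. With
`D = a² - 4s` and the conjugation `π ↦ a - π`, the identity `(z - z̄)(z' - z̄') = y y' D` gives
`D Y Y ⊆ O`; conversely `q (2π - a)` squares to `q² D`, so `2q ∈ Y` whenever `q² D ∈ O`.
Hence if the conductor lies in `b`, then `D Y ⊆ b` and `2 D b⁻¹` lies in the conductor, so
`2D ∈ b²`; and if `D ∈ b²`, then `2 b⁻¹ ⊆ Y`, so twice the conductor lies in `b`. As `b` is prime
to `2`, the factor `2` cancels in both directions.
-/

open FractionalIdeal Polynomial nonZeroDivisors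

theorem Ideal.mem_of_mul_mem_of_sup_span_eq_top {R : Type*} [CommRing R] {I : Ideal R} {t r : R}
    (h : I ⊔ Ideal.span {t} = ⊤) (htr : t * r ∈ I) : r ∈ I := by
  obtain ⟨i, hi, j, hj, hij⟩ := Submodule.mem_sup.mp (h ▸ Submodule.mem_top (x := (1 : R)))
  obtain ⟨k, rfl⟩ := Ideal.mem_span_singleton'.mp hj
  have : r = r * i + k * (t * r) := by linear_combination (-r) * hij
  rw [this]
  exact add_mem (I.mul_mem_left r hi) (I.mul_mem_left k htr)

section FractionalIdeal

variable {O E : Type*} [CommRing O] [IsDedekindDomain O] [Field E] [Algebra O E]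
  [IsFractionRing O E]

theorem FractionalIdeal.mul_algebraMap_mem_range_of_mem_inv {I : Ideal O} (hI : I ≠ ⊥) {q : E}
    (hq : q ∈ (I : FractionalIdeal O⁰ E)⁻¹) {m : O} (hm : m ∈ I) :
    q * algebraMap O E m ∈ (algebraMap O E).range :=
  (mem_one_iff _).mp <| (mem_inv_iff (coeIdeal_ne_zero.mpr hI)).mp hq _ (mem_coeIdeal_of_mem _ hm)

theorem Ideal.mem_mul_of_forall_mul_mem_inv {I J : Ideal O} (hI : I ≠ ⊥) {r : O}
    (h : ∀ q ∈ (I : FractionalIdeal O⁰ E)⁻¹, algebraMap O E r * q ∈ (J : FractionalIdeal O⁰ E)) :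
    r ∈ I * J := by
  have hI' : (I : FractionalIdeal O⁰ E) ≠ 0 := coeIdeal_ne_zero.mpr hI
  have hle : spanSingleton O⁰ (algebraMap O E r) * (I : FractionalIdeal O⁰ E)⁻¹ ≤ J := by
    refine FractionalIdeal.mul_le.mpr fun x hx q hq ↦ ?_
    obtain ⟨z, rfl⟩ := (mem_spanSingleton _).mp hx
    rw [smul_mul_assoc]
    exact Submodule.smul_mem _ _ (h q hq)
  have : spanSingleton O⁰ (algebraMap O E r) ≤ ((I * J : Ideal O) : FractionalIdeal O⁰ E) :=
    calc spanSingleton O⁰ (algebraMap O E r)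
        = spanSingleton O⁰ (algebraMap O E r) * (I : FractionalIdeal O⁰ E)⁻¹ * I := by
          rw [mul_assoc, inv_mul_cancel₀ hI', mul_one]
      _ ≤ J * I := by gcongr
      _ = ((I * J : Ideal O) : FractionalIdeal O⁰ E) := by rw [coeIdeal_mul, mul_comm]
  obtain ⟨x, hx, hxr⟩ := (mem_coeIdeal _).mp (this (mem_spanSingleton_self _ _))
  rwa [IsFractionRing.injective O E hxr] at hx

end FractionalIdeal

section QuadraticAlgebra

variable {E L : Type*} [Field E] [CommRing L] [Nontrivial L] [Algebra E L] {π : L}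

theorem linearIndependent_one_of_notMem_range (hπ : π ∉ (algebraMap E L).range) :
    LinearIndependent E ![1, π] :=
  (LinearIndependent.pair_iff' one_ne_zero).mpr fun e he ↦
    hπ ⟨e, by rw [← he, Algebra.algebraMap_eq_smul_one]⟩

theorem eq_and_eq_of_algebraMap_add_mul_eq (hπ : π ∉ (algebraMap E L).range) {x y x' y' : E}
    (h : algebraMap E L x + algebraMap E L y * π = algebraMap E L x' + algebraMap E L y' * π) :
    x = x' ∧ y = y' := by
  refine (linearIndependent_one_of_notMem_range hπ).eq_of_pair ?_
  simpa only [Algebra.smul_def, mul_one] using h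

noncomputable def basisOneOfNotMemRange (hdim : Module.finrank E L = 2)
    (hπ : π ∉ (algebraMap E L).range) : Module.Basis (Fin 2) E L :=
  basisOfLinearIndependentOfCardEqFinrank (linearIndependent_one_of_notMem_range hπ)
    (by simp [hdim])

theorem exists_algebraMap_add_mul_eq (hdim : Module.finrank E L = 2)
    (hπ : π ∉ (algebraMap E L).range) (z : L) :
    ∃ x y : E, algebraMap E L x + algebraMap E L y * π = z := by
  set B := basisOneOfNotMemRange hdim hπ
  refine ⟨B.repr z 0, B.repr z 1, ?_⟩
  conv_rhs => rw [← B.sum_repr z]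
  simp [B, basisOneOfNotMemRange, Fin.sum_univ_two, Algebra.smul_def]

noncomputable def powerBasisOfNotMemRange (hdim : Module.finrank E L = 2)
    (hπ : π ∉ (algebraMap E L).range) : PowerBasis E L where
  gen := π
  dim := 2
  basis := basisOneOfNotMemRange hdim hπ
  basis_eq_pow i := by fin_cases i <;> simp [basisOneOfNotMemRange]

theorem exists_algHom_apply_eq_sub (hdim : Module.finrank E L = 2)
    (hπ : π ∉ (algebraMap E L).range) {a s : E}
    (hquad : π ^ 2 - algebraMap E L a * π + algebraMap E L s = 0) :
    ∃ σ : L →ₐ[E] L, σ π = algebraMap E L a - π := by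
  let pb := powerBasisOfNotMemRange hdim hπ
  have hint : IsIntegral E π := pb.isIntegral_gen
  have hdeg : (minpoly E π).natDegree = 2 := pb.natDegree_minpoly
  have hmin : minpoly E π = X ^ 2 - C a * X + C s := by
    refine (eq_of_monic_of_dvd_of_natDegree_le (minpoly.monic hint) (by monicity!)
      (minpoly.dvd E _ (by simpa using hquad)) ?_).symm
    rw [hdeg]
    compute_degree!
  refine ⟨pb.lift (algebraMap E L a - π) ?_, pb.lift_gen _ _⟩
  change aeval _ (minpoly E π) = 0
  rw [hmin]
  simp only [map_add, map_sub, map_mul, map_pow, aeval_X, aeval_C]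
  linear_combination hquad

end QuadraticAlgebra

section Conductor

variable {O E L : Type*} [CommRing O] [Field E] [CommRing L] [Algebra O L] {π : L} {a s : O}

variable (O) in
def conductorIdeal (π : L) : Ideal O :=
  (Subalgebra.toSubmodule (Algebra.adjoin O ({π} : Set L))).colon
    (Subalgebra.toSubmodule (integralClosure O L))

theorem mem_adjoin_singleton_iff_of_quadratic
    (hquad : π ^ 2 - algebraMap O L a * π + algebraMap O L s = 0) {w : L} :
    w ∈ Algebra.adjoin O {π} ↔ ∃ u v : O, algebraMap O L u + algebraMap O L v * π = w := by
  refine ⟨fun hw ↦ ?_, ?_⟩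
  · induction hw using Algebra.adjoin_induction with
    | mem x hx => exact ⟨0, 1, by simp [Set.eq_of_mem_singleton hx]⟩
    | algebraMap r => exact ⟨r, 0, by simp⟩
    | add _ _ _ _ ih ih' =>
      obtain ⟨u, v, rfl⟩ := ih
      obtain ⟨u', v', rfl⟩ := ih'
      exact ⟨u + u', v + v', by simp only [map_add]; ring⟩
    | mul _ _ _ _ ih ih' =>
      obtain ⟨u, v, rfl⟩ := ih
      obtain ⟨u', v', rfl⟩ := ih'
      refine ⟨u * u' - s * (v * v'), u * v' + u' * v + a * (v * v'), ?_⟩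
      simp only [map_add, map_mul, map_sub]
      linear_combination (-(algebraMap O L v * algebraMap O L v')) * hquad
  · rintro ⟨u, v, rfl⟩
    exact add_mem (Subalgebra.algebraMap_mem _ u)
      (mul_mem (Subalgebra.algebraMap_mem _ v) (Algebra.subset_adjoin rfl))

theorem isIntegral_of_quadratic (hquad : π ^ 2 - algebraMap O L a * π + algebraMap O L s = 0) :
    IsIntegral O π :=
  ⟨X ^ 2 - C a * X + C s, by monicity!, by simpa [← aeval_def] using hquad⟩

variable [Algebra E L]

variable (O E) in
def integralCoeffs (π : L) : Set E :=
  {y | ∃ x : E, IsIntegral O (algebraMap E L x + algebraMap E L y * π)}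

theorem one_mem_integralCoeffs (hquad : π ^ 2 - algebraMap O L a * π + algebraMap O L s = 0) :
    (1 : E) ∈ integralCoeffs O E π :=
  ⟨0, by simpa using isIntegral_of_quadratic hquad⟩

variable [Algebra O E] [IsScalarTower O E L]

theorem two_mul_mem_integralCoeffs
    (hquad : π ^ 2 - algebraMap O L a * π + algebraMap O L s = 0) {q : E}
    (hq : algebraMap O E (a ^ 2 - 4 * s) * q ^ 2 ∈ (algebraMap O E).range) :
    2 * q ∈ integralCoeffs O E π := by
  obtain ⟨g, hg⟩ := hq
  refine ⟨-(q * algebraMap O E a), IsIntegral.of_pow two_pos ?_⟩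
  have hsq : (algebraMap E L (-(q * algebraMap O E a)) + algebraMap E L (2 * q) * π) ^ 2 =
      algebraMap O L g := by
    rw [IsScalarTower.algebraMap_apply O E L, hg]
    simp only [map_neg, map_mul, map_sub, map_pow, map_ofNat, ← IsScalarTower.algebraMap_apply]
    linear_combination (4 * algebraMap E L q ^ 2) * hquad
  rw [hsq]
  exact isIntegral_algebraMap

theorem sq_sub_four_mul_ne_zero [IsReduced L] (h2 : (2 : E) ≠ 0) (hπ : π ∉ (algebraMap E L).range)
    (hquad : π ^ 2 - algebraMap O L a * π + algebraMap O L s = 0) : a ^ 2 - 4 * s ≠ 0 := by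
  intro hD
  have hsq : (2 * π - algebraMap O L a) ^ 2 = 0 := by
    have := congrArg (algebraMap O L) hD
    simp only [map_sub, map_mul, map_pow, map_ofNat, map_zero] at this
    linear_combination 4 * hquad + this
  have hτ : 2 * π - algebraMap O L a = 0 := IsReduced.eq_zero _ ⟨2, hsq⟩
  have hinv : algebraMap E L 2⁻¹ * 2 = 1 := by
    rw [← map_ofNat (algebraMap E L) 2, ← map_mul, inv_mul_cancel₀ h2, map_one]
  refine hπ ⟨2⁻¹ * algebraMap O E a, ?_⟩
  rw [map_mul, ← IsScalarTower.algebraMap_apply]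
  linear_combination (-algebraMap E L 2⁻¹) * hτ + π * hinv

variable [IsIntegrallyClosed O] [IsFractionRing O E] [Nontrivial L]

theorem mem_range_of_isIntegral_algebraMap {e : E} (he : IsIntegral O (algebraMap E L e)) :
    e ∈ (algebraMap O E).range :=
  IsIntegrallyClosed.isIntegral_iff.mp
    ((isIntegral_algebraMap_iff (algebraMap E L).injective).mp he)

theorem discr_mul_mul_mem_range (hdim : Module.finrank E L = 2) (hπ : π ∉ (algebraMap E L).range)
    (hquad : π ^ 2 - algebraMap O L a * π + algebraMap O L s = 0) {y y' : E}
    (hy : y ∈ integralCoeffs O E π) (hy' : y' ∈ integralCoeffs O E π) :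
    algebraMap O E (a ^ 2 - 4 * s) * y * y' ∈ (algebraMap O E).range := by
  have hquadE : π ^ 2 - algebraMap E L (algebraMap O E a) * π +
      algebraMap E L (algebraMap O E s) = 0 := by
    simpa only [← IsScalarTower.algebraMap_apply] using hquad
  obtain ⟨σ, hσ⟩ := exists_algHom_apply_eq_sub hdim hπ hquadE
  have hsub : ∀ x y : E, (algebraMap E L x + algebraMap E L y * π) -
      σ (algebraMap E L x + algebraMap E L y * π) =
      algebraMap E L y * (2 * π - algebraMap E L (algebraMap O E a)) := by
    intro x y
    simp only [map_add, map_mul, AlgHom.commutes, hσ]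
    ring
  obtain ⟨x, hz⟩ := hy
  obtain ⟨x', hz'⟩ := hy'
  refine mem_range_of_isIntegral_algebraMap (L := L) ?_
  have : algebraMap E L (algebraMap O E (a ^ 2 - 4 * s) * y * y') =
      (algebraMap E L x + algebraMap E L y * π - σ (algebraMap E L x + algebraMap E L y * π)) *
      (algebraMap E L x' + algebraMap E L y' * π -
        σ (algebraMap E L x' + algebraMap E L y' * π)) := by
    rw [hsub, hsub]
    simp only [map_mul, map_sub, map_pow, map_ofNat]
    linear_combination (-4 * algebraMap E L y * algebraMap E L y') * hquadE
  rw [this]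
  exact (hz.sub (hz.map σ)).mul (hz'.sub (hz'.map σ))

theorem mem_conductorIdeal_iff (hdim : Module.finrank E L = 2) (hπ : π ∉ (algebraMap E L).range)
    (hquad : π ^ 2 - algebraMap O L a * π + algebraMap O L s = 0) (c : O) :
    c ∈ conductorIdeal O π ↔
      ∀ y ∈ integralCoeffs O E π, algebraMap O E c * y ∈ (algebraMap O E).range := by
  have hsmul : ∀ x y : E, c • (algebraMap E L x + algebraMap E L y * π) =
      algebraMap E L (algebraMap O E c * x) + algebraMap E L (algebraMap O E c * y) * π := by
    intro x y
    rw [Algebra.smul_def, IsScalarTower.algebraMap_apply O E L]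
    simp only [map_mul]
    ring
  simp only [conductorIdeal, Submodule.mem_colon, SetLike.mem_coe, Subalgebra.mem_toSubmodule,
    mem_integralClosure_iff, mem_adjoin_singleton_iff_of_quadratic hquad,
    IsScalarTower.algebraMap_apply O E L]
  constructor
  · rintro h y ⟨x, hz⟩
    obtain ⟨u, v, huv⟩ := h _ hz
    rw [hsmul] at huv
    exact ⟨v, (eq_and_eq_of_algebraMap_add_mul_eq hπ huv).2⟩
  · intro h z hz
    obtain ⟨x, y, rfl⟩ := exists_algebraMap_add_mul_eq hdim hπ z
    obtain ⟨v, hv⟩ := h y ⟨x, hz⟩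
    -- the `x`-coordinate comes for free: `c x = c • z - v π` is integral
    have hx : IsIntegral O (algebraMap E L (algebraMap O E c * x)) := by
      have : algebraMap E L (algebraMap O E c * x) =
          c • (algebraMap E L x + algebraMap E L y * π) - algebraMap O L v * π := by
        rw [hsmul, IsScalarTower.algebraMap_apply O E L, hv]
        ring
      rw [this]
      exact (hz.smul c).sub (isIntegral_algebraMap.mul (isIntegral_of_quadratic hquad))
    obtain ⟨u, hu⟩ := mem_range_of_isIntegral_algebraMap hx
    exact ⟨u, v, by rw [hsmul, hu, hv]⟩

theorem discr_mem_conductorIdeal (hdim : Module.finrank E L = 2)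
    (hπ : π ∉ (algebraMap E L).range)
    (hquad : π ^ 2 - algebraMap O L a * π + algebraMap O L s = 0) :
    a ^ 2 - 4 * s ∈ conductorIdeal O π :=
  (mem_conductorIdeal_iff hdim hπ hquad _).mpr fun y hy ↦ by
    simpa using discr_mul_mul_mem_range hdim hπ hquad hy (one_mem_integralCoeffs hquad)

end Conductor

section Dedekind

variable {O E L : Type*} [CommRing O] [IsDedekindDomain O] [Field E] [Algebra O E]
  [IsFractionRing O E] [CommRing L] [Nontrivial L] [Algebra E L] [Algebra O L]
  [IsScalarTower O E L] {π : L} {a s : O} {b : Ideal O}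

theorem discr_mem_sq_of_conductorIdeal_le (hdim : Module.finrank E L = 2)
    (hπ : π ∉ (algebraMap E L).range)
    (hquad : π ^ 2 - algebraMap O L a * π + algebraMap O L s = 0) (hb : b ≠ ⊥)
    (hcop : b ⊔ Ideal.span {2} = ⊤) (h : conductorIdeal O π ≤ b) : a ^ 2 - 4 * s ∈ b ^ 2 := by
  set D := a ^ 2 - 4 * s
  have hDy : ∀ y ∈ integralCoeffs O E π, ∃ m ∈ b, algebraMap O E m = algebraMap O E D * y := by
    intro y hy
    obtain ⟨m, hm⟩ := discr_mul_mul_mem_range hdim hπ hquad hy (one_mem_integralCoeffs hquad)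
    rw [mul_one] at hm
    refine ⟨m, h ((mem_conductorIdeal_iff hdim hπ hquad m).mpr fun y' hy' ↦ ?_), hm⟩
    rw [hm]
    exact discr_mul_mul_mem_range hdim hπ hquad hy hy'
  have hDb : D ∈ b := h (discr_mem_conductorIdeal hdim hπ hquad)
  have h2D : 2 * D ∈ b * b := Ideal.mem_mul_of_forall_mul_mem_inv (E := E) hb fun q hq ↦ by
    obtain ⟨g, hg⟩ := FractionalIdeal.mul_algebraMap_mem_range_of_mem_inv hb hq hDb
    have h2g : 2 * g ∈ conductorIdeal O π :=
      (mem_conductorIdeal_iff hdim hπ hquad _).mpr fun y hy ↦ by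
        obtain ⟨m, hm, hmy⟩ := hDy y hy
        obtain ⟨k, hk⟩ := FractionalIdeal.mul_algebraMap_mem_range_of_mem_inv hb hq hm
        exact ⟨2 * k, by simp only [map_mul, map_ofNat, hk, hmy, hg]; ring⟩
    exact (mem_coeIdeal _).mpr ⟨2 * g, h h2g, by simp only [map_mul, map_ofNat, hg]; ring⟩
  exact Ideal.mem_of_mul_mem_of_sup_span_eq_top (Ideal.pow_sup_eq_top hcop) (by rwa [sq])

theorem conductorIdeal_le_of_discr_mem_sq (hdim : Module.finrank E L = 2)
    (hπ : π ∉ (algebraMap E L).range)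
    (hquad : π ^ 2 - algebraMap O L a * π + algebraMap O L s = 0) (hb : b ≠ ⊥)
    (hcop : b ⊔ Ideal.span {2} = ⊤) (h : a ^ 2 - 4 * s ∈ b ^ 2) : conductorIdeal O π ≤ b := by
  intro c hc
  refine Ideal.mem_of_mul_mem_of_sup_span_eq_top hcop ?_
  rw [← Ideal.mul_top b]
  refine Ideal.mem_mul_of_forall_mul_mem_inv (E := E) hb fun q hq ↦ ?_
  have hq2 : q ^ 2 ∈ ((b ^ 2 : Ideal O) : FractionalIdeal O⁰ E)⁻¹ := by
    rw [coeIdeal_pow, ← inv_pow, sq, sq]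
    exact mul_mem_mul hq hq
  have hDq := FractionalIdeal.mul_algebraMap_mem_range_of_mem_inv (pow_ne_zero 2 hb) hq2 h
  rw [mul_comm] at hDq
  obtain ⟨v, hv⟩ := (mem_conductorIdeal_iff hdim hπ hquad c).mp hc _
    (two_mul_mem_integralCoeffs hquad hDq)
  rw [coeIdeal_top, mem_one_iff]
  exact ⟨v, by rw [hv, map_mul, map_ofNat]; ring⟩

end Dedekind

theorem odd_ideal_divides_conductor_iff_sq_divides_discriminant {v : Type} (O E L : Type v)
    [CommRing O] [IsDedekindDomain O]
    [Field E] [Algebra O E] [IsFractionRing O E]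
    [CommRing L] [Nontrivial L] [Algebra E L] [Algebra O L] [IsScalarTower O E L]
    [Algebra.Etale E L] (hdim : Module.finrank E L = 2)
    (π : L) (a s : O)
    (hquad : π ^ 2 - algebraMap O L a * π + algebraMap O L s = 0)
    (hπ : π ∉ (algebraMap E L).range)
    (b : Ideal O) (hcop : b ⊔ Ideal.span {(2 : O)} = ⊤) :
    ((Subalgebra.toSubmodule (Algebra.adjoin O ({π} : Set L))).colon
        (Subalgebra.toSubmodule (integralClosure O L)) ≤ b) ↔
      Ideal.span {a ^ 2 - 4 * s} ≤ b ^ 2 := by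
  change conductorIdeal O π ≤ b ↔ _
  rw [Ideal.span_singleton_le_iff_mem]
  rcases eq_or_ne b ⊥ with rfl | hb
  · have h2 : IsUnit (2 : O) := by simpa [Ideal.span_singleton_eq_top] using hcop
    have : IsReduced L := Algebra.FormallyUnramified.isReduced_of_field E L
    have h2E : (2 : E) ≠ 0 := by simpa only [map_ofNat] using (h2.map (algebraMap O E)).ne_zero
    have hD : a ^ 2 - 4 * s ≠ 0 := sq_sub_four_mul_ne_zero h2E hπ hquad
    exact iff_of_false (fun h ↦ hD (Ideal.mem_bot.mp (h (discr_mem_conductorIdeal hdim hπ hquad))))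
      (by rwa [Ideal.bot_pow two_ne_zero, Ideal.mem_bot])
  · exact ⟨discr_mem_sq_of_conductorIdeal_le hdim hπ hquad hb hcop,
      conductorIdeal_le_of_discr_mem_sq hdim hπ hquad hb hcop⟩
end

section
/- Let O be a PID with fraction field E, L = E[π] a quadratic étale E-algebra with π integral over O, π ∉ E, and O_L the integral closure of O in L. Fix a generator b_{O_L} of the conductor of O[π] in O_L and u ∈ O such that (1, e₂) with e₂ = (π − u)/b_{O_L} is an O-basis of O_L. Then for any O-order S ⊆ L containing π with conductor generated by b_S, the pair (1, (b_{O_L}/b_S)·e₂) = (1, (π − u)/b_S) is an O-basis of S. -/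
/-!
Write `O_L = O·1 ⊕ O·e₂`. Since `O` is a PID, an `O`-submodule `N` with `1 ∈ N ⊆ O_L` is
`O·1 ⊕ O·g e₂`, where `(g)` is the ideal of `e₂`-coordinates of elements of `N`.
Applied to `O[π] ⊆ S ⊆ O_L` this gives `O[π] = O ⊕ O·gm e₂` and `S = O ⊕ O·g e₂`, and the
conductor of `O ⊕ O·gm e₂` in `O ⊕ O·g e₂` is `(m)`. Hence `b_{O_L} ~ gm` and `b_S ~ m`, so
`(π - u)/b_S = (b_{O_L}/b_S)·e₂` is a unit multiple of `g e₂`.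
-/

open Submodule

section PairSpan

variable {O M : Type*} [CommRing O] [AddCommGroup M] [Module O M] {x e : M}

theorem smul_add_smul_mem_span_pair_smul_iff (he : LinearIndependent O ![x, e]) {a b c : O} :
    a • x + b • e ∈ span O {x, c • e} ↔ c ∣ b := by
  rw [mem_span_pair]
  constructor
  · rintro ⟨s, t, hst⟩
    rw [smul_smul] at hst
    exact ⟨t, by rw [mul_comm, (LinearIndependent.pair_iffₛ.1 he _ _ _ _ hst).2]⟩
  · rintro ⟨t, rfl⟩
    exact ⟨a, t, by rw [smul_smul, mul_comm]⟩

theorem smul_mem_span_pair_smul_iff (he : LinearIndependent O ![x, e]) {b c : O} :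
    b • e ∈ span O {x, c • e} ↔ c ∣ b := by
  simpa using smul_add_smul_mem_span_pair_smul_iff he (a := 0) (b := b) (c := c)

theorem colon_span_pair_smul [IsDomain O] (he : LinearIndependent O ![x, e]) {g : O}
    (hg : g ≠ 0) (m : O) :
    (span O {x, (g * m) • e}).colon (span O {x, g • e} : Set M) = Ideal.span {m} := by
  ext r
  simp only [colon_span, mem_colon, Set.forall_mem_insert, Set.mem_singleton_iff, forall_eq]
  rw [smul_smul, smul_mem_span_pair_smul_iff he, Ideal.mem_span_singleton, mul_comm r g,
    mul_dvd_mul_iff_left hg]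
  exact and_iff_right (smul_mem _ _ (subset_span (by simp)))

theorem exists_eq_span_pair_smul [IsPrincipalIdealRing O] (he : LinearIndependent O ![x, e])
    {N : Submodule O M} (hx : x ∈ N) (hN : N ≤ span O {x, e}) :
    ∃ g : O, N = span O {x, g • e} := by
  let coords : O × O →ₗ[O] M :=
    (LinearMap.toSpanSingleton O M x).coprod (LinearMap.toSpanSingleton O M e)
  let I : Ideal O := (N.comap coords).map (LinearMap.snd O O O)
  set g := IsPrincipal.generator I
  obtain ⟨⟨a, g'⟩, hag, rfl : g' = g⟩ := mem_map.1 (IsPrincipal.generator_mem I)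
  have hge : g • e ∈ N := by
    simpa [coords] using N.sub_mem hag (N.smul_mem a hx)
  refine ⟨g, le_antisymm (fun y hy ↦ ?_) (span_le.2 (Set.insert_subset hx (by simpa)))⟩
  obtain ⟨s, t, rfl⟩ := mem_span_pair.1 (hN hy)
  have ht : t ∈ I := mem_map.2 ⟨(s, t), by simpa [coords] using hy, rfl⟩
  rw [← Ideal.span_singleton_generator I, Ideal.mem_span_singleton] at ht
  exact (smul_add_smul_mem_span_pair_smul_iff he).2 ht

theorem exists_mul_eq_and_eq_span_pair_smul_of_colon [IsDomain O] [IsPrincipalIdealRing O]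
    (he : LinearIndependent O ![x, e]) {A N : Submodule O M} (hxA : x ∈ A) (hAN : A ≤ N)
    (hN : N ≤ span O {x, e}) {bA bN : O}
    (hbA : Ideal.span {bA} = A.colon (span O {x, e} : Set M)) (hbA0 : bA ≠ 0)
    (hbN : Ideal.span {bN} = A.colon (N : Set M)) :
    ∃ a : O, bN * a = bA ∧ N = span O {x, a • e} := by
  obtain ⟨g₀, hg₀⟩ := exists_eq_span_pair_smul he hxA (hAN.trans hN)
  obtain ⟨g, hg⟩ := exists_eq_span_pair_smul he (hAN hxA) hN
  obtain ⟨m, rfl⟩ : g ∣ g₀ :=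
    (smul_mem_span_pair_smul_iff he).1 (hg ▸ hAN (hg₀ ▸ subset_span (by simp)))
  have hbA_assoc : Associated bA (g * m) := by
    rw [← Ideal.span_singleton_eq_span_singleton, hbA, hg₀]
    simpa using colon_span_pair_smul he one_ne_zero (g * m)
  have hg0 : g ≠ 0 := left_ne_zero_of_mul (hbA_assoc.ne_zero_iff.1 hbA0)
  have hbN_assoc : Associated bN m := by
    rw [← Ideal.span_singleton_eq_span_singleton, hbN, hg₀, hg, colon_span_pair_smul he hg0]
  obtain ⟨w, hw⟩ := (hbN_assoc.mul_left g).trans hbA_assoc.symm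
  refine ⟨g * w, by rw [← hw]; ring, ?_⟩
  rw [hg, mul_comm, ← smul_smul, span_insert, span_insert, span_singleton_smul_eq w.isUnit]

theorem LinearIndependent.pair_smul_right [IsDomain O]
    (h : LinearIndependent O ![x, e]) {a : O} (ha : a ≠ 0) :
    LinearIndependent O ![x, a • e] := by
  rw [LinearIndependent.pair_iff] at h ⊢
  intro s t hst
  rw [smul_smul] at hst
  obtain ⟨hs, hta⟩ := h s (t * a) hst
  exact ⟨hs, (mul_eq_zero.1 hta).resolve_right ha⟩

end PairSpan

section SubalgebraBasis

variable {O L ι : Type*} [CommRing O] [CommRing L] [Algebra O L] {S : Subalgebra O L}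

theorem Subalgebra.linearIndependent_coe_basis (c : Module.Basis ι O S) :
    LinearIndependent O fun i ↦ (c i : L) :=
  c.linearIndependent.map' (Subalgebra.toSubmodule S).subtype (ker_subtype _)

theorem Subalgebra.toSubmodule_eq_span_range_basis (c : Module.Basis ι O S) :
    Subalgebra.toSubmodule S = span O (Set.range fun i ↦ (c i : L)) := by
  have := congr_arg (Submodule.map (Subalgebra.toSubmodule S).subtype) c.span_eq
  rw [map_span, Submodule.map_top, range_subtype, ← Set.range_comp] at this
  exact this.symm

theorem Subalgebra.exists_basis_of_toSubmodule_eq_span {v : ι → L} (hv : LinearIndependent O v)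
    (hS : Subalgebra.toSubmodule S = span O (Set.range v)) :
    ∃ d : Module.Basis ι O S, ∀ i, (d i : L) = v i :=
  ⟨(Module.Basis.span hv).map (LinearEquiv.ofEq _ _ hS.symm),
    fun i ↦ Module.Basis.coe_span_apply hv i⟩

end SubalgebraBasis

theorem IsFractionRing.isUnit_algebraMap_of_ne_zero {O E L : Type*} [CommRing O] [IsDomain O]
    [Field E] [Algebra O E] [IsFractionRing O E] [CommRing L] [Algebra O L] [Algebra E L]
    [IsScalarTower O E L] {b : O} (hb : b ≠ 0) : IsUnit (algebraMap O L b) := by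
  rw [IsScalarTower.algebraMap_apply O E L]
  exact (isUnit_iff_ne_zero.2 (IsFractionRing.to_map_eq_zero_iff.not.2 hb)).map _

theorem basis_of_intermediate_order {v : Type} (O E L : Type v)
    [CommRing O] [IsDomain O] [IsPrincipalIdealRing O]
    [Field E] [Algebra O E] [IsFractionRing O E]
    [CommRing L] [Algebra E L] [Algebra O L] [IsScalarTower O E L]
    (π : L) (hπ : π ∉ (algebraMap E L).range)
    (bOL : O) (u : O) (e₂ : L)
    (he₂ : algebraMap O L bOL * e₂ = π - algebraMap O L u)
    (hbOL : Ideal.span {bOL} =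
      (Subalgebra.toSubmodule (Algebra.adjoin O ({π} : Set L))).colon
        (Subalgebra.toSubmodule (integralClosure O L)))
    (c : Module.Basis (Fin 2) O (integralClosure O L))
    (hc0 : (c 0 : L) = 1) (hc1 : (c 1 : L) = e₂)
    (S : Subalgebra O L) (hπS : π ∈ S)
    (hfg : (Subalgebra.toSubmodule S).FG)
    (bS : O)
    (hbS : Ideal.span {bS} =
      (Subalgebra.toSubmodule (Algebra.adjoin O ({π} : Set L))).colon
        (Subalgebra.toSubmodule S))
    (e₂' : L) (he₂' : algebraMap O L bS * e₂' = π - algebraMap O L u) :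
    ∃ d : Module.Basis (Fin 2) O S, (d 0 : L) = 1 ∧ (d 1 : L) = e₂' := by
  have hc : (fun i ↦ (c i : L)) = ![1, e₂] := by ext i; fin_cases i <;> simp [hc0, hc1]
  have he : LinearIndependent O ![(1 : L), e₂] := hc ▸ Subalgebra.linearIndependent_coe_basis c
  have hOL : Subalgebra.toSubmodule (integralClosure O L) = span O {1, e₂} := by
    rw [Subalgebra.toSubmodule_eq_span_range_basis c, hc, Matrix.range_cons_cons_empty]
  have hbOL0 : bOL ≠ 0 := by
    rintro rfl
    refine hπ ⟨algebraMap O E u, ?_⟩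
    rw [← IsScalarTower.algebraMap_apply, eq_comm, ← sub_eq_zero, ← he₂, map_zero, zero_mul]
  obtain ⟨a, ha, hS⟩ := exists_mul_eq_and_eq_span_pair_smul_of_colon he
    (Algebra.adjoin O {π}).one_mem (Algebra.adjoin_le (Set.singleton_subset_iff.2 hπS))
    (hOL ▸ fun x hx ↦ IsIntegral.of_mem_of_fg S hfg x hx) (hOL ▸ hbOL) hbOL0 hbS
  have hbS0 : bS ≠ 0 := left_ne_zero_of_mul (ha ▸ hbOL0)
  have he₂'_eq : e₂' = a • e₂ := by
    apply (IsFractionRing.isUnit_algebraMap_of_ne_zero (E := E) hbS0).mul_left_cancel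
    rw [he₂', ← he₂, ← ha, map_mul, Algebra.smul_def, mul_assoc]
  obtain ⟨d, hd⟩ := Subalgebra.exists_basis_of_toSubmodule_eq_span
    (he₂'_eq ▸ he.pair_smul_right (right_ne_zero_of_mul (ha ▸ hbOL0)))
    (by rw [hS, Matrix.range_cons_cons_empty, he₂'_eq])
  exact ⟨d, hd 0, hd 1⟩
end

section
/- Let O be a Dedekind domain, L a quadratic étale algebra over its fraction field E, π ∈ L integral over O with π ∉ E, and let S ⊆ S' be two O-orders of L containing π, with conductors b_S = Ann_O(S/O[π]) and b_{S'} = Ann_O(S'/O[π]). Then S ⊆ S' if and only if b_{S'} ⊆ b_S (i.e. b_S divides b_{S'}). -/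
/-!
Write `x = a + bπ` in the `E`-basis `1, π` of `L`. As `O` is integrally closed, the minimal
polynomial of `π` has coefficients in `O`, say `π² = tπ + s`, so `O[π] = O ⊕ Oπ`. For an order
`T ∋ π` let `I_T ⊆ E` be the `O`-module of the `π`-coordinates `b` of the elements of `T`. It is a
fractional ideal containing `1`, and it also contains the constant coordinates of `T`, since
`a = b' - t b` where `b'` is the `π`-coordinate of `xπ ∈ T`. Hence `r T ⊆ O[π]` iff `r I_T ⊆ O`:
the conductor of `T` is `I_T⁻¹`, and inversion of fractional ideals of a Dedekind domain is an
order-reversing involution. Finally `I_S ⊆ I_{S'}` forces `S ⊆ S'`: elements of `S` and `S'`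
with the same `π`-coordinate differ by an element of `E` integral over `O`, i.e. of `O`.
-/

open Polynomial Module

section QuadraticBasis

variable {E L : Type*} [Field E] [CommRing L] [Algebra E L] {π : L}

theorem minpoly_natDegree_eq_two (hdim : finrank E L = 2) (hπ : π ∉ (algebraMap E L).range) :
    (minpoly E π).natDegree = 2 :=
  have : Nontrivial L := Module.nontrivial_of_finrank_pos (R := E) (by omega)
  have : Module.Finite E L := Module.finite_of_finrank_eq_succ hdim
  le_antisymm (hdim ▸ minpoly.natDegree_le π)
    ((minpoly.two_le_natDegree_iff (IsIntegral.of_finite E π)).mpr hπ)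

theorem linearIndependent_pow_fin_two (hdim : finrank E L = 2)
    (hπ : π ∉ (algebraMap E L).range) : LinearIndependent E fun i : Fin 2 ↦ π ^ (i : ℕ) :=
  minpoly_natDegree_eq_two hdim hπ ▸ linearIndependent_pow π

noncomputable def basisPowFinTwo (hdim : finrank E L = 2) (hπ : π ∉ (algebraMap E L).range) :
    Basis (Fin 2) E L :=
  basisOfLinearIndependentOfCardEqFinrank (linearIndependent_pow_fin_two hdim hπ) (by simp [hdim])

theorem coe_basisPowFinTwo (hdim : finrank E L = 2) (hπ : π ∉ (algebraMap E L).range) :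
    ⇑(basisPowFinTwo hdim hπ) = fun i : Fin 2 ↦ π ^ (i : ℕ) :=
  coe_basisOfLinearIndependentOfCardEqFinrank _ _

theorem Module.Basis.repr_mul_gen_apply_one (B : Basis (Fin 2) E L) (hB0 : B 0 = 1)
    (hB1 : B 1 = π) (z : L) : B.repr (z * π) 1 = B.repr z 0 + B.repr z 1 * B.repr (π * π) 1 := by
  have hz := B.sum_repr z
  rw [Fin.sum_univ_two, hB0, hB1] at hz
  have hπ1 : B.repr π 1 = 1 := by simp [← hB1]
  conv_lhs => rw [← hz]
  simp only [add_mul, smul_mul_assoc, one_mul, map_add, map_smul, Finsupp.add_apply,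
    Finsupp.smul_apply, hπ1, smul_eq_mul, mul_one]

end QuadraticBasis

section IntegralModel

variable {O E L : Type*} [CommRing O] [IsIntegrallyClosed O] [Field E] [Algebra O E]
  [IsFractionRing O E] [CommRing L] [Algebra E L] [Algebra O L] [IsScalarTower O E L] {π : L}

theorem exists_map_eq_minpoly (hint : IsIntegral O π) :
    ∃ g : O[X], g.map (algebraMap O E) = minpoly E π := by
  have hmonic := minpoly.monic (hint.tower_top (A := E))
  obtain ⟨f, hf, hfπ⟩ := hint
  have hdvd : minpoly E π ∣ f.map (algebraMap O E) :=
    minpoly.dvd E π (by rwa [aeval_map_algebraMap, aeval_def])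
  obtain ⟨g, hg⟩ := IsIntegrallyClosed.eq_map_mul_C_of_dvd E hf hdvd
  exact ⟨g, by rwa [hmonic.leadingCoeff, C_1, mul_one] at hg⟩

theorem toSubmodule_adjoin_eq_span_pow_fin_two [IsDomain O] (hdim : finrank E L = 2)
    (hπ : π ∉ (algebraMap E L).range) (hint : IsIntegral O π) :
    Subalgebra.toSubmodule (Algebra.adjoin O {π}) =
      Submodule.span O (Set.range fun i : Fin 2 ↦ π ^ (i : ℕ)) := by
  obtain ⟨g, hg⟩ := exists_map_eq_minpoly (E := E) hint
  have hinj := IsFractionRing.injective O E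
  have hmonic : g.Monic :=
    monic_of_injective hinj (hg ▸ minpoly.monic (hint.tower_top (A := E)))
  have hdeg : g.degree = (2 : ℕ) := by
    rw [degree_eq_natDegree hmonic.ne_zero, ← natDegree_map_eq_of_injective hinj, hg,
      minpoly_natDegree_eq_two hdim hπ]
  have hroot : aeval π g = 0 := by rw [← aeval_map_algebraMap E, hg, minpoly.aeval]
  ext y
  rw [Subalgebra.mem_toSubmodule, Algebra.adjoin_singleton_eq_range_aeval, AlgHom.mem_range,
    PowerBasis.mem_span_pow']
  constructor
  · rintro ⟨f, rfl⟩
    exact ⟨f %ₘ g, hdeg ▸ degree_modByMonic_lt f hmonic,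
      (aeval_modByMonic_eq_self_of_root hroot).symm⟩
  · rintro ⟨f, -, rfl⟩
    exact ⟨f, rfl⟩

end IntegralModel

theorem Submodule.one_div_le_one {R A : Type*} [CommSemiring R] [CommSemiring A] [Algebra R A]
    {I : Submodule R A} (h1 : (1 : A) ∈ I) : 1 / I ≤ 1 :=
  fun x hx ↦ by simpa using (Submodule.mem_div_iff_forall_mul_mem.mp hx) 1 h1

theorem Submodule.one_div_le_one_div_iff {O E : Type*} [CommRing O] [IsDedekindDomain O]
    [Field E] [Algebra O E] [IsFractionRing O E] {I J : Submodule O E} (hI : I.FG) (hJ : J.FG)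
    (hI0 : I ≠ ⊥) (hJ0 : J ≠ ⊥) : 1 / J ≤ 1 / I ↔ I ≤ J := by
  let I' : FractionalIdeal (nonZeroDivisors O) E := ⟨I, FractionalIdeal.isFractional_of_fg hI⟩
  let J' : FractionalIdeal (nonZeroDivisors O) E := ⟨J, FractionalIdeal.isFractional_of_fg hJ⟩
  have hI' : I' ≠ 0 := FractionalIdeal.coeToSubmodule_ne_bot.mp hI0
  have hJ' : J' ≠ 0 := FractionalIdeal.coeToSubmodule_ne_bot.mp hJ0
  have h := FractionalIdeal.inv_le_inv_iff hJ' hI'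
  rwa [← FractionalIdeal.coe_le_coe, FractionalIdeal.inv_eq, FractionalIdeal.inv_eq,
    FractionalIdeal.coe_div hJ', FractionalIdeal.coe_div hI', FractionalIdeal.coe_one,
    ← FractionalIdeal.coe_le_coe] at h

section Orders

variable {O E L : Type*} [CommRing O] [Field E] [Algebra O E] [CommRing L] [Algebra E L]
  [Algebra O L] [IsScalarTower O E L]

noncomputable def Module.Basis.coordSubmodule {ι : Type*} (B : Basis ι E L) (i : ι)
    (N : Submodule O L) : Submodule O E :=
  N.map ((B.coord i).restrictScalars O)

theorem Module.Basis.mem_coordSubmodule {ι : Type*} (B : Basis ι E L) (i : ι)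
    (N : Submodule O L) (z : L) (hz : z ∈ N) : B.repr z i ∈ B.coordSubmodule i N :=
  ⟨z, hz, rfl⟩

variable {π : L} (B : Basis (Fin 2) E L)

theorem Module.Basis.mem_adjoin_iff_repr_mem [IsDomain O] [IsTorsionFree O E]
    (hOπ : Subalgebra.toSubmodule (Algebra.adjoin O {π}) = Submodule.span O (Set.range B))
    (z : L) : z ∈ Algebra.adjoin O {π} ↔ ∀ i, B.repr z i ∈ Set.range (algebraMap O E) := by
  rw [← Subalgebra.mem_toSubmodule, hOπ, B.mem_span_iff_repr_mem O]

theorem Module.Basis.one_mem_coordSubmodule (hB1 : B 1 = π) {T : Subalgebra O L} (hT : π ∈ T) :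
    (1 : E) ∈ B.coordSubmodule 1 (Subalgebra.toSubmodule T) := by
  simpa using B.mem_coordSubmodule 1 _ (B 1) (hB1 ▸ hT)

theorem Module.Basis.repr_zero_mem_coordSubmodule [IsDomain O] [IsTorsionFree O E]
    (hB0 : B 0 = 1) (hB1 : B 1 = π)
    (hOπ : Subalgebra.toSubmodule (Algebra.adjoin O {π}) = Submodule.span O (Set.range B))
    {T : Subalgebra O L} (hT : π ∈ T) {z : L} (hz : z ∈ T) :
    B.repr z 0 ∈ B.coordSubmodule 1 (Subalgebra.toSubmodule T) := by
  have hππ : π * π ∈ Algebra.adjoin O {π} :=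
    mul_mem (Algebra.self_mem_adjoin_singleton O π) (Algebra.self_mem_adjoin_singleton O π)
  obtain ⟨t, ht⟩ := (B.mem_adjoin_iff_repr_mem hOπ _).mp hππ 1
  have h : B.repr z 0 = B.repr (z * π) 1 - t • B.repr z 1 := by
    rw [B.repr_mul_gen_apply_one hB0 hB1, ← ht, Algebra.smul_def]
    ring
  rw [h]
  exact sub_mem (B.mem_coordSubmodule 1 _ _ (T.mul_mem hz hT))
    (Submodule.smul_mem _ t (B.mem_coordSubmodule 1 _ _ hz))

theorem Module.Basis.colon_adjoin_eq_comap_one_div [IsDomain O] [IsTorsionFree O E]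
    (hB0 : B 0 = 1) (hB1 : B 1 = π)
    (hOπ : Subalgebra.toSubmodule (Algebra.adjoin O {π}) = Submodule.span O (Set.range B))
    {T : Subalgebra O L} (hT : π ∈ T) :
    (Subalgebra.toSubmodule (Algebra.adjoin O {π})).colon (Subalgebra.toSubmodule T) =
      (1 / B.coordSubmodule 1 (Subalgebra.toSubmodule T)).comap (Algebra.linearMap O E) := by
  have hrepr : ∀ (r : O) z i, B.repr (r • z) i = algebraMap O E r * B.repr z i := fun r z i ↦ by
    rw [← algebraMap_smul E r z, map_smul, Finsupp.smul_apply, smul_eq_mul]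
  ext r
  simp only [Submodule.mem_colon, Submodule.mem_comap, Submodule.mem_div_iff_forall_mul_mem,
    Algebra.linearMap_apply, Subalgebra.coe_toSubmodule, SetLike.mem_coe,
    Subalgebra.mem_toSubmodule, B.mem_adjoin_iff_repr_mem hOπ, hrepr, Submodule.mem_one]
  constructor
  · rintro h _ ⟨z, hz, rfl⟩
    exact h z hz 1
  · intro h z hz i
    fin_cases i
    · obtain ⟨w, hw, hwz⟩ := B.repr_zero_mem_coordSubmodule hB0 hB1 hOπ hT hz
      exact hwz ▸ h _ ⟨w, hw, rfl⟩
    · exact h _ (B.mem_coordSubmodule 1 _ z hz)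

theorem Module.Basis.coordSubmodule_le_coordSubmodule_iff [IsDomain O] [IsIntegrallyClosed O]
    [IsFractionRing O E] (hB0 : B 0 = 1) {S S' : Subalgebra O L}
    (hS : (Subalgebra.toSubmodule S).FG) (hS' : (Subalgebra.toSubmodule S').FG) :
    B.coordSubmodule 1 (Subalgebra.toSubmodule S) ≤ B.coordSubmodule 1 (Subalgebra.toSubmodule S')
      ↔ S ≤ S' := by
  refine ⟨fun h x hx ↦ ?_, fun h ↦ Submodule.map_mono h⟩
  obtain ⟨y, hy, hxy⟩ := h (B.mem_coordSubmodule 1 _ x hx)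
  have : Nontrivial L := ⟨⟨1, 0, hB0 ▸ B.ne_zero 0⟩⟩
  have hxy1 : B.repr (x - y) 1 = 0 := by
    rw [map_sub, Finsupp.sub_apply, ← hxy, LinearMap.restrictScalars_apply, B.coord_apply,
      sub_self]
  have hc : x - y = algebraMap E L (B.repr (x - y) 0) := by
    have h := B.sum_repr (x - y)
    rwa [Fin.sum_univ_two, hB0, hxy1, zero_smul, add_zero, ← Algebra.algebraMap_eq_smul_one,
      eq_comm] at h
  have hint : IsIntegral O (algebraMap E L (B.repr (x - y) 0)) :=
    hc ▸ (IsIntegral.of_mem_of_fg S hS x hx).sub (IsIntegral.of_mem_of_fg S' hS' y hy)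
  obtain ⟨r, hr⟩ := IsIntegrallyClosed.isIntegral_iff.mp
    ((isIntegral_algebraMap_iff (algebraMap E L).injective).mp hint)
  have hxr : x = y + algebraMap O L r := by
    rw [IsScalarTower.algebraMap_apply O E L, hr, ← hc]
    ring
  exact hxr ▸ S'.add_mem hy (S'.algebraMap_mem r)

end Orders

theorem order_le_iff_conductor_dvd {v : Type} (O E L : Type v)
    [CommRing O] [IsDedekindDomain O]
    [Field E] [Algebra O E] [IsFractionRing O E]
    [CommRing L] [Algebra E L] [Algebra O L] [IsScalarTower O E L]
    (hdim : Module.finrank E L = 2)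
    (π : L) (hint : IsIntegral O π) (hπ : π ∉ (algebraMap E L).range)
    (S S' : Subalgebra O L)
    (hπS : π ∈ S) (hfg : (Subalgebra.toSubmodule S).FG)
    (hπS' : π ∈ S') (hfg' : (Subalgebra.toSubmodule S').FG) :
    S ≤ S' ↔
      (Subalgebra.toSubmodule (Algebra.adjoin O ({π} : Set L))).colon
          (Subalgebra.toSubmodule S') ≤
        (Subalgebra.toSubmodule (Algebra.adjoin O ({π} : Set L))).colon
          (Subalgebra.toSubmodule S) := by
  set B := basisPowFinTwo hdim hπ
  have hB0 : B 0 = 1 := by simp [B, coe_basisPowFinTwo]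
  have hB1 : B 1 = π := by simp [B, coe_basisPowFinTwo]
  have hOπ : Subalgebra.toSubmodule (Algebra.adjoin O {π}) = Submodule.span O (Set.range B) := by
    rw [toSubmodule_adjoin_eq_span_pow_fin_two hdim hπ hint, coe_basisPowFinTwo]
  have hfg_coord : ∀ T : Subalgebra O L, (Subalgebra.toSubmodule T).FG →
      (B.coordSubmodule 1 (Subalgebra.toSubmodule T)).FG := fun _ h ↦ h.map _
  have hne_bot : ∀ T : Subalgebra O L, π ∈ T → B.coordSubmodule 1 (Subalgebra.toSubmodule T) ≠ ⊥ :=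
    fun T hT ↦ (Submodule.ne_bot_iff _).mpr ⟨1, B.one_mem_coordSubmodule hB1 hT, one_ne_zero⟩
  have hle_range : 1 / B.coordSubmodule 1 (Subalgebra.toSubmodule S') ≤
      LinearMap.range (Algebra.linearMap O E) := by
    rw [← Submodule.one_eq_range]
    exact Submodule.one_div_le_one (B.one_mem_coordSubmodule hB1 hπS')
  rw [B.colon_adjoin_eq_comap_one_div hB0 hB1 hOπ hπS',
    B.colon_adjoin_eq_comap_one_div hB0 hB1 hOπ hπS,
    Submodule.comap_le_comap_iff_of_le_range hle_range,
    Submodule.one_div_le_one_div_iff (hfg_coord S hfg) (hfg_coord S' hfg') (hne_bot S hπS)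
      (hne_bot S' hπS'),
    B.coordSubmodule_le_coordSubmodule_iff hB0 hfg hfg']
end
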